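/- arXiv:math/0608736 — 2 statements merged into one kernel-verified Lean document; each statement's English description precedes it below -/
import Mathlib

section
/- Let S be a control semigroup, X a metric space, and n ∈ ℕ. Then asdim_S X ≤ n if and only if there exists g ∈ S such that for all sufficiently large s > 0 there is a cover U of X with multiplicity m(U) ≤ n+1, Lebesgue number L(U) ≥ s, that is g(s)-bounded. -/
open Filter Set Metric Topology
open scoped NNReal ENNReal

/-- A large-scale (asymptotic) dim-control function: continuous, increasing,
eventually at least the identity, tending to infinity. -/
def IsLSControl (f : ℝ≥0 → ℝ≥0) : Prop :=
  Continuous f ∧ Monotone f ∧ (∀ᶠ x in atTop, x ≤ f x) ∧ Tendsto f atTop atTop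

/-- Asymptotically linear: coincides with a linear function on a neighborhood of infinity. -/
def IsAsympLinear (f : ℝ≥0 → ℝ≥0) : Prop :=
  ∃ a b : ℝ≥0, ∀ᶠ x in atTop, f x = a * x + b

/-- A (large-scale) control semigroup. -/
def IsControlSemigroup (S : Set (ℝ≥0 → ℝ≥0)) : Prop :=
  (∀ f ∈ S, IsLSControl f) ∧
  (∀ f, IsLSControl f → IsAsympLinear f → f ∈ S) ∧
  (∀ f ∈ S, ∀ g ∈ S, f ∘ g ∈ S)

/-- A family of subsets is `s`-disjoint if distinct members are at distance `> s`. -/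
def SDisjoint {X : Type*} [MetricSpace X] (s : ℝ≥0) (𝒰 : Set (Set X)) : Prop :=
  ∀ U ∈ 𝒰, ∀ V ∈ 𝒰, U ≠ V → ∀ x ∈ U, ∀ y ∈ V, (s : ℝ) < dist x y

/-- A family of subsets is `D`-bounded if each member has diameter at most `D`. -/
def BoundedBy {X : Type*} [MetricSpace X] (D : ℝ≥0) (𝒰 : Set (Set X)) : Prop :=
  ∀ U ∈ 𝒰, EMetric.diam U ≤ (D : ℝ≥0∞)

/-- `asdim_S X ≤ n`. -/
def ASDimLE (S : Set (ℝ≥0 → ℝ≥0)) (X : Type*) [MetricSpace X] (n : ℕ) : Prop :=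
  ∃ f ∈ S, ∃ s₀ : ℝ≥0, ∀ s : ℝ≥0, s₀ ≤ s →
    ∃ 𝒰 : Fin (n + 1) → Set (Set X),
      (⋃ i, ⋃₀ 𝒰 i) = univ ∧ ∀ i, SDisjoint s (𝒰 i) ∧ BoundedBy (f s) (𝒰 i)

/-- The `S`-controlled asymptotic dimension, as an element of `ℕ∞`. -/
noncomputable def ASDim (S : Set (ℝ≥0 → ℝ≥0)) (X : Type*) [MetricSpace X] : ℕ∞ :=
  sInf {k : ℕ∞ | ∃ n : ℕ, k = n ∧ ASDimLE S X n}

/-- `S₁ ⪯ S₂` : `S₂` is finer than `S₁`. -/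
def Preceq (S₁ S₂ : Set (ℝ≥0 → ℝ≥0)) : Prop :=
  ∀ f ∈ S₂, ∃ g ∈ S₁, ∀ᶠ x in atTop, f x ≤ g x

/-!
Thickening by `s` the members of a `2s`-disjoint family keeps them pairwise disjoint, so the
`n + 1` families of an `asdim`-cover at scale `2s` thicken to a single cover of multiplicity at
most `n + 1` and Lebesgue number at least `s`.

Conversely, call `infEDist x Uᶜ` the depth of `x` in `U` and fix the levels
`ℓ k = (n + 1 - k) s`. Given `x`, the least `k` for which `x` has depth `> ℓ (k + 1)` in at most
`k + 1` members of the cover `𝒰` is a level at which `x` has depth `> ℓ k` in at least `k + 1`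
members. So `x` lies in one of the sets `W σ` of points having depth `> ℓ k` in every member of a
`(k + 1)`-element `σ ⊆ 𝒰` and depth `> ℓ (k + 1)` in at most `k + 1` members of `𝒰`; these form
the `k`-th family. Each `W σ` lies in a member of `σ`, and `W σ`, `W τ` are `s`-disjoint for
`σ ≠ τ` because a point within `s` of both has depth `> ℓ (k + 1)` in every member of `σ ∪ τ`,
which has more than `k + 1` elements.
-/

lemma IsControlSemigroup.affine_mem {S : Set (ℝ≥0 → ℝ≥0)} (hS : IsControlSemigroup S)
    {a : ℝ≥0} (ha : 1 ≤ a) (b : ℝ≥0) : (fun x => a * x + b) ∈ S := by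
  have hid_le : ∀ x, x ≤ a * x + b := fun x =>
    (le_mul_of_one_le_left zero_le ha).trans le_self_add
  refine hS.2.1 _ ⟨by fun_prop, fun x y h => by dsimp only; gcongr, .of_forall hid_le,
    tendsto_atTop_mono hid_le tendsto_id⟩ ⟨a, b, .of_forall fun _ => rfl⟩

section ASDim

variable {S : Set (ℝ≥0 → ℝ≥0)} {X : Type*} [MetricSpace X]

lemma ASDimLE.mono {m n : ℕ} (h : ASDimLE S X m) (hmn : m ≤ n) : ASDimLE S X n := by
  obtain ⟨f, hf, s₀, hcov⟩ := h
  refine ⟨f, hf, s₀, fun s hs => ?_⟩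
  obtain ⟨𝒰, h𝒰, hprop⟩ := hcov s hs
  refine ⟨fun i => if h : (i : ℕ) < m + 1 then 𝒰 ⟨i, h⟩ else ∅, ?_, fun i => ?_⟩
  · refine eq_univ_of_forall fun x => ?_
    obtain ⟨j, hj⟩ := mem_iUnion.mp (h𝒰.symm ▸ mem_univ x : x ∈ ⋃ i, ⋃₀ 𝒰 i)
    exact mem_iUnion.mpr ⟨⟨j, by omega⟩, by simpa [Fin.is_le] using hj⟩
  · dsimp only
    split_ifs
    · exact hprop _
    · exact ⟨fun U hU => hU.elim, fun U hU => hU.elim⟩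

lemma asdim_le_iff_asdimLE {n : ℕ} : ASDim S X ≤ n ↔ ASDimLE S X n := by
  refine ⟨fun h => ?_, fun h => sInf_le ⟨n, rfl, h⟩⟩
  obtain hempty | hne := {k : ℕ∞ | ∃ m : ℕ, k = m ∧ ASDimLE S X m}.eq_empty_or_nonempty
  · simp [ASDim, hempty] at h
  · obtain ⟨m, hm, hASm⟩ := csInf_mem hne
    exact hASm.mono (by rwa [ASDim, hm, Nat.cast_le] at h)

end ASDim

section Thickening

variable {X : Type*} [MetricSpace X]

lemma le_infEDist_compl_thickening {E : Set X} {x : X} (hx : x ∈ E) (δ : ℝ≥0) :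
    (δ : ℝ≥0∞) ≤ infEDist x (thickening δ E)ᶜ := by
  refine le_infEDist.mpr fun y hy => ?_
  rw [mem_compl_iff, mem_thickening_iff_infEDist_lt, ENNReal.ofReal_coe_nnreal, not_lt] at hy
  exact (hy.trans (infEDist_le_edist_of_mem hx)).trans_eq (edist_comm y x)

lemma SDisjoint.eq_of_mem_thickening {s : ℝ≥0} {𝒰 : Set (Set X)} (h : SDisjoint (2 * s) 𝒰)
    {U V : Set X} (hU : U ∈ 𝒰) (hV : V ∈ 𝒰) {x : X} (hxU : x ∈ thickening s U)
    (hxV : x ∈ thickening s V) : U = V := by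
  by_contra hne
  obtain ⟨u, hu, hxu⟩ := mem_thickening_iff.mp hxU
  obtain ⟨v, hv, hxv⟩ := mem_thickening_iff.mp hxV
  have huv := h U hU V hV hne u hu v hv
  have := dist_triangle_left u v x
  push_cast at huv
  linarith

lemma encard_setOf_mem_iUnion_image_thickening_le {ι : Type*} [Fintype ι] {s : ℝ≥0}
    {𝒰 : ι → Set (Set X)} (h : ∀ i, SDisjoint (2 * s) (𝒰 i)) (x : X) :
    {V | V ∈ ⋃ i, thickening s '' 𝒰 i ∧ x ∈ V}.encard ≤ Fintype.card ι := by
  have hsub : ∀ i, {V | V ∈ thickening s '' 𝒰 i ∧ x ∈ V}.encard ≤ 1 := fun i => by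
    rw [encard_le_one_iff]
    rintro _ _ ⟨⟨U, hU, rfl⟩, hxU⟩ ⟨⟨V, hV, rfl⟩, hxV⟩
    rw [(h i).eq_of_mem_thickening hU hV hxU hxV]
  calc {V | V ∈ ⋃ i, thickening s '' 𝒰 i ∧ x ∈ V}.encard
      = (⋃ i, {V | V ∈ thickening s '' 𝒰 i ∧ x ∈ V}).encard := by
        simp only [mem_iUnion, iUnion_ofPred, exists_and_right]
    _ ≤ ∑ i, {V | V ∈ thickening s '' 𝒰 i ∧ x ∈ V}.encard := encard_iUnion_le_of_fintype _
    _ ≤ ∑ _i : ι, 1 := Finset.sum_le_sum fun i _ => hsub i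
    _ = Fintype.card ι := by simp

lemma BoundedBy.image_thickening {D s : ℝ≥0} {𝒰 : Set (Set X)} (h : BoundedBy D 𝒰) :
    BoundedBy (D + 2 * s) (thickening s '' 𝒰) := by
  rintro _ ⟨U, hU, rfl⟩
  calc ediam (thickening s U) ≤ ediam U + 2 * s := ediam_thickening_le s
    _ ≤ ↑(D + 2 * s) := by push_cast; gcongr; exact h U hU

theorem exists_cover_multiplicity_lebesgue_of_sDisjoint {n : ℕ} {s D : ℝ≥0} (hs : 0 < s)
    {𝒰 : Fin (n + 1) → Set (Set X)} (hcov : (⋃ i, ⋃₀ 𝒰 i) = univ)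
    (hdisj : ∀ i, SDisjoint (2 * s) (𝒰 i)) (hbdd : ∀ i, BoundedBy D (𝒰 i)) :
    ∃ 𝒱 : Set (Set X), ⋃₀ 𝒱 = univ ∧
      (∀ x : X, {V | V ∈ 𝒱 ∧ x ∈ V}.encard ≤ (n + 1 : ℕ∞)) ∧
      (∀ x : X, (s : ℝ≥0∞) ≤ ⨆ V ∈ 𝒱, infEDist x Vᶜ) ∧
      BoundedBy (D + 2 * s) 𝒱 := by
  have hmem : ∀ x, ∃ i, ∃ U ∈ 𝒰 i, x ∈ U := fun x => by
    simpa using (hcov.symm ▸ mem_univ x : x ∈ ⋃ i, ⋃₀ 𝒰 i)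
  refine ⟨⋃ i, thickening s '' 𝒰 i, eq_univ_of_forall fun x => ?_, fun x => ?_, fun x => ?_, ?_⟩
  · obtain ⟨i, U, hU, hxU⟩ := hmem x
    exact ⟨_, mem_iUnion.mpr ⟨i, mem_image_of_mem _ hU⟩, self_subset_thickening hs U hxU⟩
  · simpa using encard_setOf_mem_iUnion_image_thickening_le hdisj x
  · obtain ⟨i, U, hU, hxU⟩ := hmem x
    exact (le_infEDist_compl_thickening hxU s).trans
      (le_biSup (fun V => infEDist x Vᶜ) (mem_iUnion.mpr ⟨i, mem_image_of_mem _ hU⟩))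
  · intro V hV
    obtain ⟨i, hi⟩ := mem_iUnion.mp hV
    exact (hbdd i).image_thickening V hi

end Thickening

lemma exists_succ_le_apply_and_apply_succ_le_succ {N : ℕ → ℕ∞} (h₀ : 1 ≤ N 0) :
    ∀ n : ℕ, N (n + 1) ≤ n + 1 → ∃ k ≤ n, (k + 1 : ℕ∞) ≤ N k ∧ N (k + 1) ≤ k + 1
  | 0, h => ⟨0, le_rfl, by simpa using h₀, by simpa using h⟩
  | n + 1, h => by
    by_cases hn : N (n + 1) ≤ n + 1
    · obtain ⟨k, hk, hNk⟩ := exists_succ_le_apply_and_apply_succ_le_succ h₀ n hn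
      exact ⟨k, hk.trans n.le_succ, hNk⟩
    · exact ⟨n + 1, le_rfl, by simpa using Order.add_one_le_of_lt (not_le.mp hn),
        by simpa using h⟩

lemma Set.encard_lt_encard_union_of_ne {α : Type*} {σ τ : Set α} {m : ℕ∞} (hm : m ≠ ⊤)
    (hσ : σ.encard = m) (hτ : τ.encard = m) (hne : σ ≠ τ) : m < (σ ∪ τ).encard := by
  by_contra! hle
  have hσ_eq := (encard_ne_top_iff.mp (hσ ▸ hm)).eq_of_subset_of_encard_le subset_union_left
    (hle.trans hσ.ge)
  have hτ_eq := (encard_ne_top_iff.mp (hτ ▸ hm)).eq_of_subset_of_encard_le subset_union_right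
    (hle.trans hτ.ge)
  exact hne (hσ_eq.trans hτ_eq.symm)

section Depth

variable {X : Type*} [PseudoEMetricSpace X]

def deepMembers (𝒰 : Set (Set X)) (t : ℝ≥0∞) (x : X) : Set (Set X) :=
  {V | V ∈ 𝒰 ∧ t < infEDist x Vᶜ}

lemma mem_of_mem_deepMembers {𝒰 : Set (Set X)} {t : ℝ≥0∞} {x : X} {V : Set X}
    (hV : V ∈ deepMembers 𝒰 t x) : x ∈ V := by
  by_contra hx
  simpa [infEDist_zero_of_mem (mem_compl hx)] using hV.2

lemma deepMembers_subset_setOf_mem (𝒰 : Set (Set X)) (t : ℝ≥0∞) (x : X) :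
    deepMembers 𝒰 t x ⊆ {V | V ∈ 𝒰 ∧ x ∈ V} :=
  fun _ hV => ⟨hV.1, mem_of_mem_deepMembers hV⟩

lemma deepMembers_subset_of_edist_le {𝒰 : Set (Set X)} {t t' r : ℝ≥0∞} (ht : t' + r ≤ t)
    {x y : X} (hxy : edist x y ≤ r) : deepMembers 𝒰 t y ⊆ deepMembers 𝒰 t' x := by
  rintro V ⟨hV, hyV⟩
  refine ⟨hV, lt_of_add_lt_add_right (?_ : t' + r < infEDist x Vᶜ + r)⟩
  calc t' + r ≤ t := ht
    _ < infEDist y Vᶜ := hyV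
    _ ≤ infEDist x Vᶜ + edist y x := infEDist_le_infEDist_add_edist
    _ ≤ infEDist x Vᶜ + r := by rw [edist_comm]; gcongr

def levelFamily (𝒰 : Set (Set X)) (t t' : ℝ≥0∞) (m : ℕ∞) : Set (Set X) :=
  {W | ∃ σ ⊆ 𝒰, σ.encard = m ∧
    W = {x | σ ⊆ deepMembers 𝒰 t x ∧ (deepMembers 𝒰 t' x).encard ≤ m}}

lemma mem_sUnion_levelFamily {𝒰 : Set (Set X)} {t t' : ℝ≥0∞} {m : ℕ∞} {x : X}
    (ht : m ≤ (deepMembers 𝒰 t x).encard) (ht' : (deepMembers 𝒰 t' x).encard ≤ m) :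
    x ∈ ⋃₀ levelFamily 𝒰 t t' m := by
  obtain ⟨σ, hσ, hσm⟩ := exists_subset_encard_eq ht
  exact ⟨_, ⟨σ, hσ.trans fun V hV => hV.1, hσm, rfl⟩, hσ, ht'⟩

lemma exists_subset_of_mem_levelFamily {𝒰 : Set (Set X)} {t t' : ℝ≥0∞} {m : ℕ∞} (hm : m ≠ 0)
    {W : Set X} (hW : W ∈ levelFamily 𝒰 t t' m) : ∃ U ∈ 𝒰, W ⊆ U := by
  obtain ⟨σ, hσ𝒰, hσm, rfl⟩ := hW
  obtain ⟨V, hV⟩ := nonempty_of_encard_ne_zero (hσm ▸ hm)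
  exact ⟨V, hσ𝒰 hV, fun x hx => mem_of_mem_deepMembers (hx.1 hV)⟩

end Depth

section Refinement

variable {X : Type*} [MetricSpace X]

lemma sDisjoint_levelFamily {𝒰 : Set (Set X)} {s : ℝ≥0} {t t' : ℝ≥0∞} {m : ℕ∞} (hm : m ≠ ⊤)
    (ht : t' + s ≤ t) : SDisjoint s (levelFamily 𝒰 t t' m) := by
  rintro _ ⟨σ, -, hσ, rfl⟩ _ ⟨τ, -, hτ, rfl⟩ hne x ⟨hxσ, hx⟩ y ⟨hyτ, -⟩
  by_contra! hxy
  have hστ : σ ≠ τ := fun h => hne (h ▸ rfl)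
  have hedist : edist x y ≤ s := by
    rw [edist_dist, ← ENNReal.ofReal_coe_nnreal]; exact ENNReal.ofReal_le_ofReal hxy
  have hunion : σ ∪ τ ⊆ deepMembers 𝒰 t' x :=
    union_subset (hxσ.trans (deepMembers_subset_of_edist_le ht (edist_self x ▸ zero_le)))
      (hyτ.trans (deepMembers_subset_of_edist_le ht hedist))
  exact ((encard_lt_encard_union_of_ne hm hσ hτ hστ).trans_le (encard_le_encard hunion)).not_ge hx

theorem exists_sDisjoint_refinement {𝒰 : Set (Set X)} {n : ℕ} {s : ℝ≥0}
    (hmult : ∀ x, {U | U ∈ 𝒰 ∧ x ∈ U}.encard ≤ n + 1)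
    (hleb : ∀ x, ∃ U ∈ 𝒰, ((n + 1) * s : ℝ≥0∞) < infEDist x Uᶜ) :
    ∃ 𝒱 : Fin (n + 1) → Set (Set X), (⋃ i, ⋃₀ 𝒱 i) = univ ∧
      ∀ i, SDisjoint s (𝒱 i) ∧ ∀ W ∈ 𝒱 i, ∃ U ∈ 𝒰, W ⊆ U := by
  set ℓ : ℕ → ℝ≥0∞ := fun k => ((n + 1 - k : ℕ) : ℝ≥0∞) * s
  have hℓ : ∀ k ≤ n, ℓ (k + 1) + s ≤ ℓ k := fun k hk => by
    show ((n + 1 - (k + 1) : ℕ) : ℝ≥0∞) * s + s ≤ ((n + 1 - k : ℕ) : ℝ≥0∞) * s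
    rw [show n + 1 - k = n + 1 - (k + 1) + 1 by omega]
    push_cast
    rw [add_mul, one_mul]
  refine ⟨fun i => levelFamily 𝒰 (ℓ i) (ℓ (i + 1)) (i + 1), eq_univ_of_forall fun x => ?_,
    fun i => ⟨sDisjoint_levelFamily (by simp) (hℓ i i.is_le),
      fun W => exists_subset_of_mem_levelFamily (by simp)⟩⟩
  have h₀ : (deepMembers 𝒰 (ℓ 0) x).Nonempty := by
    obtain ⟨U, hU, hxU⟩ := hleb x
    exact ⟨U, hU, by simpa [ℓ] using hxU⟩
  obtain ⟨k, hk, hNk⟩ := exists_succ_le_apply_and_apply_succ_le_succ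
    (N := fun k => (deepMembers 𝒰 (ℓ k) x).encard) (one_le_encard_iff_nonempty.mpr h₀) n
    ((encard_le_encard (deepMembers_subset_setOf_mem _ _ x)).trans (hmult x))
  exact mem_iUnion.mpr ⟨⟨k, by omega⟩, mem_sUnion_levelFamily hNk.1 hNk.2⟩

end Refinement

lemma BoundedBy.of_forall_exists_subset {X : Type*} [MetricSpace X] {D : ℝ≥0}
    {𝒰 𝒱 : Set (Set X)} (h : BoundedBy D 𝒰) (h𝒱 : ∀ W ∈ 𝒱, ∃ U ∈ 𝒰, W ⊆ U) : BoundedBy D 𝒱 :=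
  fun W hW => let ⟨U, hU, hWU⟩ := h𝒱 W hW; (ediam_mono hWU).trans (h U hU)

def ControlledLebesgueCovers (S : Set (ℝ≥0 → ℝ≥0)) (X : Type*) [MetricSpace X] (n : ℕ) :
    Prop :=
  ∃ g ∈ S, ∃ s₀ : ℝ≥0, ∀ s : ℝ≥0, s₀ ≤ s →
    ∃ 𝒰 : Set (Set X), ⋃₀ 𝒰 = univ ∧
      (∀ x : X, {U | U ∈ 𝒰 ∧ x ∈ U}.encard ≤ (n + 1 : ℕ∞)) ∧
      (∀ x : X, (s : ℝ≥0∞) ≤ ⨆ U ∈ 𝒰, infEDist x Uᶜ) ∧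
      BoundedBy (g s) 𝒰

section Control

variable {S : Set (ℝ≥0 → ℝ≥0)} {X : Type*} [MetricSpace X] {n : ℕ}

theorem ASDimLE.controlledLebesgueCovers (hS : IsControlSemigroup S) (h : ASDimLE S X n) :
    ControlledLebesgueCovers S X n := by
  obtain ⟨f, hf, s₀, hcov⟩ := h
  obtain ⟨x₁, hx₁⟩ := eventually_atTop.mp (hS.1 f hf).2.2.1
  have h2 : (fun x : ℝ≥0 => 2 * x) ∈ S := by simpa using hS.affine_mem one_le_two 0
  refine ⟨(fun x => 2 * x) ∘ f ∘ (fun x => 2 * x), hS.2.2 _ h2 _ (hS.2.2 _ hf _ h2),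
    s₀ ⊔ x₁ ⊔ 1, fun s hs => ?_⟩
  have hs₂ : s₀ ⊔ x₁ ⊔ 1 ≤ 2 * s := hs.trans (le_mul_of_one_le_left zero_le one_le_two)
  simp only [sup_le_iff] at hs hs₂
  obtain ⟨𝒰, h𝒰, hprop⟩ := hcov (2 * s) hs₂.1.1
  obtain ⟨𝒱, h𝒱, hmult, hleb, hbdd⟩ := exists_cover_multiplicity_lebesgue_of_sDisjoint
    (zero_lt_one.trans_le hs.2) h𝒰 (fun i => (hprop i).1) (fun i => (hprop i).2)
  refine ⟨𝒱, h𝒱, hmult, hleb, fun V hV => (hbdd V hV).trans ?_⟩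
  simp only [Function.comp_apply, ENNReal.coe_le_coe, two_mul (f _)]
  exact add_le_add_right (hx₁ _ hs₂.1.2) _

theorem ControlledLebesgueCovers.asdimLE (hS : IsControlSemigroup S)
    (h : ControlledLebesgueCovers S X n) : ASDimLE S X n := by
  obtain ⟨g, hg, s₀, hcov⟩ := h
  set lin : ℝ≥0 → ℝ≥0 := fun x => (n + 1) * x + 1
  have hlin : lin ∈ S := hS.affine_mem le_add_self 1
  refine ⟨g ∘ lin, hS.2.2 g hg lin hlin, s₀, fun s hs => ?_⟩
  obtain ⟨𝒰, -, hmult, hleb, hbdd⟩ :=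
    hcov (lin s) (hs.trans ((le_mul_of_one_le_left zero_le le_add_self).trans le_self_add))
  obtain ⟨𝒱, h𝒱, hprop⟩ := exists_sDisjoint_refinement hmult fun x => by
    -- the `+ 1` in `lin` puts the Lebesgue number strictly above the top level `(n + 1) s`
    have : ((n + 1) * s : ℝ≥0∞) < lin s := by
      simpa [lin] using ENNReal.lt_add_right (ENNReal.mul_ne_top (by simp) (by simp)) one_ne_zero
    simpa only [lt_iSup_iff, exists_prop] using this.trans_le (hleb x)
  exact ⟨𝒱, h𝒱, fun i => ⟨(hprop i).1, hbdd.of_forall_exists_subset (hprop i).2⟩⟩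

end Control

/-- `asdim_S X ≤ n` iff there is `g ∈ S` such that for all sufficiently large `s`
there is a `g(s)`-bounded cover of `X` of multiplicity at most `n+1` and
Lebesgue number at least `s`.  Here the Lebesgue number condition is expressed
pointwise: for every `x`, `sup_{U ∈ 𝒰} d(x, X ∖ U) ≥ s`. -/
theorem asdim_le_iff_multiplicity_lebesgue (S : Set (ℝ≥0 → ℝ≥0)) (hS : IsControlSemigroup S)
    (X : Type*) [MetricSpace X] (n : ℕ) :
    ASDim S X ≤ (n : ℕ∞) ↔
      ∃ g ∈ S, ∃ s₀ : ℝ≥0, ∀ s : ℝ≥0, s₀ ≤ s →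
        ∃ 𝒰 : Set (Set X), ⋃₀ 𝒰 = univ ∧
          (∀ x : X, {U | U ∈ 𝒰 ∧ x ∈ U}.encard ≤ (n + 1 : ℕ∞)) ∧
          (∀ x : X, (s : ℝ≥0∞) ≤ ⨆ U ∈ 𝒰, EMetric.infEdist x Uᶜ) ∧
          BoundedBy (g s) 𝒰 :=
  asdim_le_iff_asdimLE.trans
    ⟨ASDimLE.controlledLebesgueCovers hS, ControlledLebesgueCovers.asdimLE hS⟩
end

section
/- Let S̄ be a global control semigroup. For every metric space X: smdim_{Trunc_{**}(S̄)} X = m-dim_S̄ X and asdim_{Trunc^{**}(S̄)} X = M-dim_S̄ X. -/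
open Filter Set Metric Topology
open scoped NNReal ENNReal

/-- A small-scale dim-control function. -/
def IsSSControl (f : ℝ≥0 → ℝ≥0) : Prop :=
  Continuous f ∧ Monotone f ∧ f 0 = 0 ∧ ∀ᶠ x in 𝓝[>] (0 : ℝ≥0), x ≤ f x

/-- Coincides with a linear function on a neighborhood of `0`. -/
def IsLinearNearZero (f : ℝ≥0 → ℝ≥0) : Prop :=
  ∃ a b : ℝ≥0, ∀ᶠ x in 𝓝 (0 : ℝ≥0), f x = a * x + b

/-- A small-scale control semigroup. -/
def IsSSControlSemigroup (ξ : Set (ℝ≥0 → ℝ≥0)) : Prop :=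
  (∀ f ∈ ξ, IsSSControl f) ∧
  (∀ f, IsSSControl f → IsLinearNearZero f → f ∈ ξ) ∧
  (∀ f ∈ ξ, ∀ g ∈ ξ, f ∘ g ∈ ξ)

/-- A global dim-control function. -/
def IsGlobalControl (f : ℝ≥0 → ℝ≥0) : Prop :=
  Continuous f ∧ Monotone f ∧ f 0 = 0 ∧ Tendsto f atTop atTop ∧
    (∀ᶠ x in 𝓝[>] (0 : ℝ≥0), x ≤ f x) ∧ (∀ᶠ x in atTop, x ≤ f x)

/-- A global control semigroup. -/
def IsGlobalControlSemigroup (S : Set (ℝ≥0 → ℝ≥0)) : Prop :=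
  (∀ f ∈ S, IsGlobalControl f) ∧
  (∀ f, IsGlobalControl f → IsLinearNearZero f → IsAsympLinear f → f ∈ S) ∧
  (∀ f ∈ S, ∀ g ∈ S, f ∘ g ∈ S)

/-- `smdim_ξ X ≤ n`. -/
def SMDimLE (ξ : Set (ℝ≥0 → ℝ≥0)) (X : Type*) [MetricSpace X] (n : ℕ) : Prop :=
  ∃ f ∈ ξ, ∃ s₀ : ℝ≥0, 0 < s₀ ∧ ∀ s : ℝ≥0, 0 < s → s ≤ s₀ →
    ∃ 𝒰 : Fin (n + 1) → Set (Set X),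
      (⋃ i, ⋃₀ 𝒰 i) = univ ∧ ∀ i, SDisjoint s (𝒰 i) ∧ BoundedBy (f s) (𝒰 i)

/-- The `ξ`-controlled small-scale dimension. -/
noncomputable def SMDim (ξ : Set (ℝ≥0 → ℝ≥0)) (X : Type*) [MetricSpace X] : ℕ∞ :=
  sInf {k : ℕ∞ | ∃ n : ℕ, k = n ∧ SMDimLE ξ X n}

/-- `dim_S̄ X ≤ n` (global dimension). -/
def GDimLE (S : Set (ℝ≥0 → ℝ≥0)) (X : Type*) [MetricSpace X] (n : ℕ) : Prop :=
  ∃ f ∈ S, ∀ s : ℝ≥0, 0 < s →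
    ∃ 𝒰 : Fin (n + 1) → Set (Set X),
      (⋃ i, ⋃₀ 𝒰 i) = univ ∧ ∀ i, SDisjoint s (𝒰 i) ∧ BoundedBy (f s) (𝒰 i)

/-- The `S̄`-controlled global dimension. -/
noncomputable def GDim (S : Set (ℝ≥0 → ℝ≥0)) (X : Type*) [MetricSpace X] : ℕ∞ :=
  sInf {k : ℕ∞ | ∃ n : ℕ, k = n ∧ GDimLE S X n}

/-- Large-scale truncation `Trunc^{**}(S̄)`. -/
def TruncInf (S : Set (ℝ≥0 → ℝ≥0)) : Set (ℝ≥0 → ℝ≥0) :=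
  {g | IsLSControl g ∧ ∃ f ∈ S, ∀ᶠ x in atTop, g x = f x}

/-- Small-scale truncation `Trunc_{**}(S̄)`. -/
def TruncZero (S : Set (ℝ≥0 → ℝ≥0)) : Set (ℝ≥0 → ℝ≥0) :=
  {g | IsSSControl g ∧ ∃ f ∈ S, ∀ᶠ x in 𝓝 (0 : ℝ≥0), g x = f x}

/-- The linked set `Link(ξ, S)`. -/
def Link (ξ S : Set (ℝ≥0 → ℝ≥0)) : Set (ℝ≥0 → ℝ≥0) :=
  {g | Continuous g ∧ Monotone g ∧
    ∃ g₁ ∈ ξ, ∃ g₂ ∈ S, (∀ᶠ x in 𝓝 (0 : ℝ≥0), g x = g₁ x) ∧ (∀ᶠ x in atTop, g x = g₂ x)}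

/-- The distance function of an explicitly given metric space structure. -/
def MDist {X : Type*} (m : MetricSpace X) (x y : X) : ℝ :=
  @dist X m.toPseudoMetricSpace.toDist x y


/-!
Truncating the metric at `1` does not change it at small scales (`d'_1 = min(d, 1)`) or at large
scales (`d''_1`), so in that range of scales the covers of `(X, d)` and of the truncated space are
the same. At the remaining scales the truncated space has a trivial cover: the single set `X` when
all distances are at most `1`, the singletons when distinct points are at distance at least `1`.
Multiplying a control function of `S̄` by a large constant `a ≥ 1` (linear functions belong to `S̄`)
absorbs the bounds of those trivial covers and of the intermediate scales of `asdim`.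
-/

section Covers

variable {X : Type*}

lemma boundedBy_iff [MetricSpace X] {D : ℝ≥0} {𝒰 : Set (Set X)} :
    BoundedBy D 𝒰 ↔ ∀ U ∈ 𝒰, ∀ x ∈ U, ∀ y ∈ U, dist x y ≤ (D : ℝ) := by
  refine forall₂_congr fun U _ => ?_
  change Metric.ediam U ≤ _ ↔ _
  rw [Metric.ediam_le_iff]
  refine forall₂_congr fun x _ => forall₂_congr fun y _ => ?_
  rw [edist_dist, ← ENNReal.ofReal_coe_nnreal, ENNReal.ofReal_le_ofReal_iff D.coe_nonneg]

def HasCover (m : MetricSpace X) (n : ℕ) (s D : ℝ≥0) : Prop :=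
  ∃ 𝒰 : Fin (n + 1) → Set (Set X),
    (⋃ i, ⋃₀ 𝒰 i) = univ ∧ ∀ i, @SDisjoint X m s (𝒰 i) ∧ @BoundedBy X m D (𝒰 i)

lemma HasCover.of_mdist {m₁ m₂ : MetricSpace X} {n : ℕ} {s D s' D' : ℝ≥0}
    (h : HasCover m₁ n s D)
    (hsep : ∀ x y, (s : ℝ) < MDist m₁ x y → (s' : ℝ) < MDist m₂ x y)
    (hbdd : ∀ x y, MDist m₁ x y ≤ D → MDist m₂ x y ≤ D') :
    HasCover m₂ n s' D' := by
  obtain ⟨𝒰, hcov, h𝒰⟩ := h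
  refine ⟨𝒰, hcov, fun i => ⟨fun U hU V hV hUV x hx y hy =>
    hsep x y ((h𝒰 i).1 U hU V hV hUV x hx y hy), ?_⟩⟩
  have hb := (@boundedBy_iff X m₁ D (𝒰 i)).1 (h𝒰 i).2
  exact (@boundedBy_iff X m₂ D' (𝒰 i)).2 fun U hU x hx y hy => hbdd x y (hb U hU x hx y hy)

lemma hasCover_of_family {m : MetricSpace X} (n : ℕ) {s D : ℝ≥0} (𝒱 : Set (Set X))
    (hcov : ⋃₀ 𝒱 = univ) (hsep : @SDisjoint X m s 𝒱) (hbdd : @BoundedBy X m D 𝒱) :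
    HasCover m n s D :=
  ⟨fun _ => 𝒱, by simp [hcov, iUnion_const], fun _ => ⟨hsep, hbdd⟩⟩

lemma hasCover_of_mdist_le (m : MetricSpace X) (n : ℕ) {s D : ℝ≥0}
    (h : ∀ x y, MDist m x y ≤ D) : HasCover m n s D :=
  hasCover_of_family n {univ} (sUnion_singleton _)
    (fun _ hU _ hV hUV => (hUV (hU.trans hV.symm)).elim)
    (@boundedBy_iff X m D _ |>.2 fun _ _ x _ y _ => h x y)

lemma hasCover_of_lt_mdist (m : MetricSpace X) (n : ℕ) {s D : ℝ≥0}
    (h : ∀ x y, x ≠ y → (s : ℝ) < MDist m x y) : HasCover m n s D := by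
  refine hasCover_of_family n (range fun x : X => {x})
    (eq_univ_of_forall fun x => ⟨{x}, mem_range_self x, rfl⟩) ?_ ?_
  · rintro _ ⟨x, rfl⟩ _ ⟨y, rfl⟩ hxy x' hx' y' hy'
    rw [mem_singleton_iff.1 hx', mem_singleton_iff.1 hy']
    exact h x y fun e => hxy (e ▸ rfl)
  · refine (@boundedBy_iff X m D _).2 ?_
    rintro _ ⟨x, rfl⟩ x' hx' y' hy'
    rw [mem_singleton_iff.1 hx', mem_singleton_iff.1 hy']
    exact (@dist_self X m.toPseudoMetricSpace x).trans_le D.coe_nonneg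

end Covers

section Control

variable {Sb : Set (ℝ≥0 → ℝ≥0)} {f : ℝ≥0 → ℝ≥0}

lemma IsGlobalControl.pos (hf : IsGlobalControl f) {x : ℝ≥0} (hx : 0 < x) : 0 < f x := by
  obtain ⟨-, hmono, -, -, hsmall, -⟩ := hf
  obtain ⟨y, hy, hyx⟩ := (hsmall.and (Ioo_mem_nhdsGT hx)).exists
  exact hyx.1.trans_le (hy.trans (hmono hyx.2.le))

lemma IsGlobalControlSemigroup.const_mul_comp_mem (hSb : IsGlobalControlSemigroup Sb)
    {a : ℝ≥0} (ha : 1 ≤ a) (hf : f ∈ Sb) : (fun x => a * f x) ∈ Sb := by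
  have hle : ∀ x : ℝ≥0, x ≤ a * x := fun x => le_mul_of_one_le_left zero_le ha
  have hlin : (fun x : ℝ≥0 => a * x) ∈ Sb :=
    hSb.2.1 _ ⟨continuous_const.mul continuous_id, fun _ _ hxy => mul_le_mul_right hxy a,
      mul_zero a, tendsto_atTop_mono hle tendsto_id, .of_forall hle, .of_forall hle⟩
      ⟨a, 0, .of_forall fun _ => (add_zero _).symm⟩ ⟨a, 0, .of_forall fun _ => (add_zero _).symm⟩
  exact hSb.2.2 _ hlin f hf

lemma IsGlobalControlSemigroup.mem_truncZero (hSb : IsGlobalControlSemigroup Sb) (hf : f ∈ Sb) :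
    f ∈ TruncZero Sb :=
  have ⟨hc, hm, h0, _, hle, _⟩ := hSb.1 f hf
  ⟨⟨hc, hm, h0, hle⟩, f, hf, .of_forall fun _ => rfl⟩

lemma IsGlobalControlSemigroup.mem_truncInf (hSb : IsGlobalControlSemigroup Sb) (hf : f ∈ Sb) :
    f ∈ TruncInf Sb :=
  have ⟨hc, hm, _, htop, _, hle⟩ := hSb.1 f hf
  ⟨⟨hc, hm, hle, htop⟩, f, hf, .of_forall fun _ => rfl⟩

lemma exists_one_le_and_le_mul {c : ℝ≥0} (hc : 0 < c) (C : ℝ≥0) : ∃ a, 1 ≤ a ∧ C ≤ a * c :=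
  ⟨1 + C / c, le_self_add, by rw [add_mul, one_mul, div_mul_cancel₀ _ hc.ne']; exact le_add_self⟩

lemma exists_pos_forall_le_of_eventually_nhds_zero {p : ℝ≥0 → Prop}
    (h : ∀ᶠ x in 𝓝 0, p x) : ∃ ε > 0, ∀ x ≤ ε, p x :=
  (nhds_bot_basis_Iic (α := ℝ≥0)).eventually_iff.1 h

end Control

section Truncations

variable {X : Type*} {m m' m'' : MetricSpace X} {Sb : Set (ℝ≥0 → ℝ≥0)} {n : ℕ}

lemma mdist_self (m : MetricSpace X) (x : X) : MDist m x x = 0 :=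
  @dist_self X m.toPseudoMetricSpace x

section MaxOne

variable (h'' : ∀ x y : X, x ≠ y → MDist m'' x y = max 1 (MDist m x y))
include h''

lemma mdist_le_of_eq_max_one (x y : X) : MDist m x y ≤ MDist m'' x y := by
  rcases eq_or_ne x y with rfl | hxy
  · rw [mdist_self, mdist_self]
  · exact h'' x y hxy ▸ le_max_right _ _

lemma mdist_le_max_one_of_eq_max_one (x y : X) : MDist m'' x y ≤ max 1 (MDist m x y) := by
  rcases eq_or_ne x y with rfl | hxy
  · rw [mdist_self, mdist_self]; exact zero_le_one.trans (le_max_left _ _)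
  · exact (h'' x y hxy).le

lemma one_le_mdist_of_eq_max_one {x y : X} (hxy : x ≠ y) : 1 ≤ MDist m'' x y :=
  h'' x y hxy ▸ le_max_left _ _

end MaxOne

lemma smdimLE_truncZero_of_gdimLE_min (hSb : IsGlobalControlSemigroup Sb)
    (h' : ∀ x y : X, MDist m' x y = min (MDist m x y) 1) (H : @GDimLE Sb X m' n) :
    @SMDimLE (TruncZero Sb) X m n := by
  obtain ⟨f, hf, hcov⟩ := H
  obtain ⟨hfc, -, hf0, -⟩ := hSb.1 f hf
  have hf_lt_one : ∀ᶠ s in 𝓝 0, f s < 1 :=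
    hfc.continuousAt.eventually_lt continuousAt_const (by simp [hf0])
  obtain ⟨s₀, hs₀, hs₀f⟩ := exists_pos_forall_le_of_eventually_nhds_zero hf_lt_one
  refine ⟨f, hSb.mem_truncZero hf, s₀, hs₀, fun s hs hss₀ =>
    HasCover.of_mdist (hcov s hs) (fun x y hxy => ?_) (fun x y hxy => ?_)⟩
  · rw [h'] at hxy
    exact hxy.trans_le (min_le_left _ _)
  · rw [h'] at hxy
    have hfs : ¬ (1 : ℝ) ≤ f s := not_le.2 (by exact_mod_cast hs₀f s hss₀)
    exact (min_le_iff.1 hxy).resolve_right hfs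

lemma asdimLE_truncInf_of_gdimLE_max_one (hSb : IsGlobalControlSemigroup Sb)
    (h'' : ∀ x y : X, x ≠ y → MDist m'' x y = max 1 (MDist m x y)) (H : @GDimLE Sb X m'' n) :
    @ASDimLE (TruncInf Sb) X m n := by
  obtain ⟨f, hf, hcov⟩ := H
  refine ⟨f, hSb.mem_truncInf hf, 1, fun s hs => HasCover.of_mdist (hcov s (one_pos.trans_le hs))
    (fun x y hxy => ?_) (fun x y hxy => (mdist_le_of_eq_max_one h'' x y).trans hxy)⟩
  have hs1 : ¬ (s : ℝ) < 1 := not_lt.2 (by exact_mod_cast hs)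
  exact (lt_max_iff.1 (hxy.trans_le (mdist_le_max_one_of_eq_max_one h'' x y))).resolve_left hs1

lemma gdimLE_min_of_smdimLE_truncZero (hSb : IsGlobalControlSemigroup Sb)
    (h' : ∀ x y : X, MDist m' x y = min (MDist m x y) 1) (H : @SMDimLE (TruncZero Sb) X m n) :
    @GDimLE Sb X m' n := by
  obtain ⟨g, ⟨-, f, hf, hgf⟩, s₀, hs₀, hcov⟩ := H
  obtain ⟨ε, hε, hεg⟩ :=
    exists_pos_forall_le_of_eventually_nhds_zero (hgf.and (eventually_lt_nhds one_pos))
  set t := min ε s₀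
  obtain ⟨a, ha, hat⟩ := exists_one_le_and_le_mul ((hSb.1 f hf).pos (lt_min hε hs₀)) 1
  refine ⟨fun x => a * f x, hSb.const_mul_comp_mem ha hf, fun s hs => ?_⟩
  rcases le_total s t with hst | hts
  · obtain ⟨hgs, hs1⟩ := hεg s (hst.trans (min_le_left _ _))
    refine HasCover.of_mdist (hcov s hs (hst.trans (min_le_right _ _))) (fun x y hxy => ?_)
      (fun x y hxy => ?_)
    · rw [h']
      exact lt_min hxy (by exact_mod_cast hs1)
    · have hfs : g s ≤ a * f s := hgs ▸ le_mul_of_one_le_left zero_le ha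
      rw [h']
      exact (min_le_left _ _).trans (hxy.trans (by exact_mod_cast hfs))
  · refine hasCover_of_mdist_le m' n fun x y => ?_
    have hfs : 1 ≤ a * f s := hat.trans (mul_le_mul_right ((hSb.1 f hf).2.1 hts) a)
    rw [h']
    exact (min_le_right _ _).trans (by exact_mod_cast hfs)

lemma gdimLE_max_one_of_asdimLE_truncInf (hSb : IsGlobalControlSemigroup Sb)
    (h'' : ∀ x y : X, x ≠ y → MDist m'' x y = max 1 (MDist m x y))
    (H : @ASDimLE (TruncInf Sb) X m n) : @GDimLE Sb X m'' n := by
  obtain ⟨g, ⟨-, f, hf, hgf⟩, s₀, hcov⟩ := H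
  obtain ⟨M, hM⟩ := eventually_atTop.1 hgf
  have hfm : Monotone f := (hSb.1 f hf).2.1
  set T := max s₀ M
  obtain ⟨a, ha, haC⟩ := exists_one_le_and_le_mul ((hSb.1 f hf).pos one_pos) (max 1 (f T))
  refine ⟨fun x => a * f x, hSb.const_mul_comp_mem ha hf, fun s hs => ?_⟩
  rcases lt_or_ge s 1 with hs1 | hs1
  · refine hasCover_of_lt_mdist m'' n fun x y hxy => ?_
    exact (by exact_mod_cast hs1 : (s : ℝ) < 1).trans_le (one_le_mdist_of_eq_max_one h'' hxy)
  -- the cover at scale `max s T` serves at scale `s`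
  set t := max s T
  have hC : max 1 (f T) ≤ a * f s := haC.trans (mul_le_mul_right (hfm hs1) a)
  have hft : max 1 (f t) ≤ a * f s := by
    rw [hfm.map_max]
    exact max_le ((le_max_left _ _).trans hC)
      (max_le (le_mul_of_one_le_left zero_le ha) ((le_max_right _ _).trans hC))
  have hgt : g t = f t := hM t ((le_max_right s₀ M).trans (le_max_right _ _))
  refine HasCover.of_mdist (hcov t ((le_max_left s₀ M).trans (le_max_right _ _)))
    (fun x y hxy => ?_) (fun x y hxy => ?_)
  · have hst : (s : ℝ) ≤ t := by exact_mod_cast le_max_left s T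
    exact (hst.trans_lt hxy).trans_le (mdist_le_of_eq_max_one h'' x y)
  · rw [hgt] at hxy
    calc MDist m'' x y ≤ max 1 (MDist m x y) := mdist_le_max_one_of_eq_max_one h'' x y
      _ ≤ max 1 (f t : ℝ) := max_le_max le_rfl hxy
      _ ≤ a * f s := by exact_mod_cast hft

lemma smdimLE_truncZero_iff_gdimLE_min (hSb : IsGlobalControlSemigroup Sb)
    (h' : ∀ x y : X, MDist m' x y = min (MDist m x y) 1) :
    @SMDimLE (TruncZero Sb) X m n ↔ @GDimLE Sb X m' n :=
  ⟨gdimLE_min_of_smdimLE_truncZero hSb h', smdimLE_truncZero_of_gdimLE_min hSb h'⟩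

lemma asdimLE_truncInf_iff_gdimLE_max_one (hSb : IsGlobalControlSemigroup Sb)
    (h'' : ∀ x y : X, x ≠ y → MDist m'' x y = max 1 (MDist m x y)) :
    @ASDimLE (TruncInf Sb) X m n ↔ @GDimLE Sb X m'' n :=
  ⟨gdimLE_max_one_of_asdimLE_truncInf hSb h'', asdimLE_truncInf_of_gdimLE_max_one hSb h''⟩

end Truncations

/-- `smdim_{Trunc_{**}(S̄)} X = m-dim_S̄ X` and `asdim_{Trunc^{**}(S̄)} X = M-dim_S̄ X`,
where `m-dim` and `M-dim` are the global dimensions with respect to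
`d'_1 = min(d,1)` and `d''_1` (`d''_1(x,y) = max (1, d(x,y))` for `x ≠ y`). -/
theorem smdim_trunc_and_asdim_trunc (X : Type*) (m : MetricSpace X)
    (Sb : Set (ℝ≥0 → ℝ≥0)) (hSb : IsGlobalControlSemigroup Sb)
    (m' m'' : MetricSpace X)
    (h' : ∀ x y : X, MDist m' x y = min (MDist m x y) 1)
    (h'' : ∀ x y : X, x ≠ y → MDist m'' x y = max 1 (MDist m x y)) :
    @SMDim (TruncZero Sb) X m = @GDim Sb X m' ∧
    @ASDim (TruncInf Sb) X m = @GDim Sb X m'' :=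
  ⟨by simp only [SMDim, GDim, smdimLE_truncZero_iff_gdimLE_min hSb h'],
    by simp only [ASDim, GDim, asdimLE_truncInf_iff_gdimLE_max_one hSb h'']⟩
end
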